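/- arXiv:2512.16973 — 3 statements merged into one kernel-verified Lean document; each statement's English description precedes it below -/
import Mathlib

section
/- Ekeland's variational principle (order-theoretic form): Let (X, d) be a complete metric space, f : X → [0, ∞] lower semicontinuous, and x̄ ∈ X. Then there exists ȳ ∈ X with f(ȳ) + d(x̄, ȳ) ≤ f(x̄) such that f(z) + d(z, ȳ) ≥ f(ȳ) for all z ∈ X. -/
open ENNReal

/-!
Write `y ≼ x` for `f y + d(x, y) ≤ f x`. This is a preorder whose lower sets
`S x = ekelandBelow f x` are closed (by lower semicontinuity) and nested (`y ≼ x` implies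
`S y ⊆ S x`, by the triangle inequality). Starting from `x̄` (with `f x̄ < ∞`), choose
`xₙ₊₁ ∈ S xₙ` with `f xₙ₊₁ ≤ inf_{S xₙ} f + 2⁻ⁿ`. Every `y ∈ S xₙ₊₁` then satisfies
`d(xₙ₊₁, y) ≤ f xₙ₊₁ - f y ≤ 2⁻ⁿ`, so the nested closed sets `S xₙ` shrink to a single point `ȳ`;
any `z ≼ ȳ` lies in all `S xₙ` as well, hence `z = ȳ`.
-/

open Filter Topology Set Metric

theorem ENNReal.exists_mem_le_biInf_add {α : Type*} {s : Set α} (hs : s.Nonempty)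
    (g : α → ℝ≥0∞) {ε : ℝ≥0∞} (hε : ε ≠ 0) : ∃ x ∈ s, g x ≤ (⨅ y ∈ s, g y) + ε := by
  rcases eq_or_ne (⨅ y ∈ s, g y) ⊤ with htop | htop
  · obtain ⟨x, hx⟩ := hs
    exact ⟨x, hx, by simp [htop]⟩
  · have hlt := ENNReal.lt_add_right htop hε
    simp only [iInf_lt_iff] at hlt
    obtain ⟨x, hx, hlt⟩ := hlt
    exact ⟨x, hx, hlt.le⟩

theorem exists_iInter_eq_singleton_of_tendsto_ediam {X : Type*} [EMetricSpace X]
    [CompleteSpace X] {s : ℕ → Set X} (hanti : Antitone s) (hclosed : ∀ n, IsClosed (s n))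
    (hne : ∀ n, (s n).Nonempty) (hdiam : Tendsto (fun n => ediam (s n)) atTop (𝓝 0)) :
    ∃ y, ⋂ n, s n = {y} := by
  choose u hu using hne
  have hmem : ∀ n m, n ≤ m → u m ∈ s n := fun n m h => hanti h (hu m)
  have hcauchy : CauchySeq u := EMetric.cauchySeq_iff_le_tendsto_0.2
    ⟨fun N => ediam (s N), fun n m N hn hm => edist_le_ediam_of_mem (hmem N n hn) (hmem N m hm),
      hdiam⟩
  obtain ⟨y, hy⟩ := cauchySeq_tendsto_of_complete hcauchy
  have hyI : y ∈ ⋂ n, s n := mem_iInter.2 fun n =>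
    (hclosed n).mem_of_tendsto hy ((eventually_ge_atTop n).mono fun m hm => hmem n m hm)
  have hsub : (⋂ n, s n).Subsingleton := by
    refine ediam_eq_zero_iff.1 (nonpos_iff_eq_zero.1 ?_)
    exact ge_of_tendsto' hdiam fun n => ediam_mono (iInter_subset _ n)
  exact ⟨y, hsub.eq_singleton_of_mem hyI⟩

section EkelandOrder

variable {X : Type*} [EMetricSpace X] (f : X → ℝ≥0∞)

def ekelandBelow (x : X) : Set X := {y | f y + edist x y ≤ f x}

variable {f}

theorem self_mem_ekelandBelow (x : X) : x ∈ ekelandBelow f x := by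
  simp [ekelandBelow]

theorem ekelandBelow_subset {x y : X} (hy : y ∈ ekelandBelow f x) :
    ekelandBelow f y ⊆ ekelandBelow f x := fun z hz =>
  calc f z + edist x z ≤ f z + edist y z + edist x y := by
        rw [add_assoc, add_comm (edist y z)]; gcongr; exact edist_triangle _ _ _
    _ ≤ f y + edist x y := by gcongr; exact hz
    _ ≤ f x := hy

theorem isClosed_ekelandBelow (hf : LowerSemicontinuous f) (x : X) :
    IsClosed (ekelandBelow f x) :=
  (hf.add (continuous_const.edist continuous_id).lowerSemicontinuous).isClosed_preimage (f x)

theorem edist_le_of_le_biInf_add {w x y : X} {ε : ℝ≥0∞} (hx : x ∈ ekelandBelow f w)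
    (hxinf : f x ≤ (⨅ z ∈ ekelandBelow f w, f z) + ε) (hy : y ∈ ekelandBelow f x)
    (hfy : f y ≠ ⊤) : edist x y ≤ ε := by
  have : f y + edist x y ≤ f y + ε :=
    calc f y + edist x y ≤ f x := hy
      _ ≤ (⨅ z ∈ ekelandBelow f w, f z) + ε := hxinf
      _ ≤ f y + ε := by gcongr; exact biInf_le f (ekelandBelow_subset hx hy)
  exact (ENNReal.add_le_add_iff_left hfy).1 this

theorem exists_mem_ekelandBelow_forall_mem_eq [CompleteSpace X] (hf : LowerSemicontinuous f)
    {x : X} (hx : f x ≠ ⊤) : ∃ y ∈ ekelandBelow f x, ∀ z ∈ ekelandBelow f y, z = y := by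
  choose next hnext_mem hnext_le using fun (n : ℕ) (w : X) =>
    ENNReal.exists_mem_le_biInf_add ⟨w, self_mem_ekelandBelow w⟩ f
      (pow_ne_zero n (ENNReal.inv_ne_zero.2 ofNat_ne_top) : (2⁻¹ : ℝ≥0∞) ^ n ≠ 0)
  let a : ℕ → X := fun n => Nat.rec x next n
  let s : ℕ → Set X := fun n => ekelandBelow f (a n)
  have hanti : Antitone s :=
    antitone_nat_of_succ_le fun n => ekelandBelow_subset (hnext_mem n (a n))
  have hfin : ∀ n, ∀ y ∈ s n, f y ≠ ⊤ := fun n y hy =>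
    ne_top_of_le_ne_top hx (le_of_add_le_left (hanti n.zero_le hy))
  have hball : ∀ n, s (n + 1) ⊆ closedEBall (a (n + 1)) (2⁻¹ ^ n) := fun n y hy => by
    rw [mem_closedEBall, edist_comm]
    exact edist_le_of_le_biInf_add (hnext_mem n (a n)) (hnext_le n (a n)) hy (hfin (n + 1) y hy)
  have hdiam : ∀ n, ediam (s (n + 1)) ≤ 2 * 2⁻¹ ^ n := fun n =>
    (ediam_mono (hball n)).trans ediam_closedEBall_le
  have htend : Tendsto (fun n => ediam (s n)) atTop (𝓝 0) := by
    refine (tendsto_add_atTop_iff_nat 1).1 (tendsto_of_tendsto_of_tendsto_of_le_of_le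
      tendsto_const_nhds ?_ (fun _ => zero_le) hdiam)
    simpa using ENNReal.Tendsto.const_mul
      (ENNReal.tendsto_pow_atTop_nhds_zero_of_lt_one (by norm_num)) (Or.inr ofNat_ne_top)
  obtain ⟨y, hy⟩ := exists_iInter_eq_singleton_of_tendsto_ediam hanti
    (fun n => isClosed_ekelandBelow hf (a n)) (fun n => ⟨a n, self_mem_ekelandBelow _⟩) htend
  have hys : ∀ n, y ∈ s n := mem_iInter.1 (hy ▸ mem_singleton y)
  refine ⟨y, hys 0, fun z hz => ?_⟩
  have : z ∈ ⋂ n, s n := mem_iInter.2 fun n => ekelandBelow_subset (hys n) hz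
  rwa [hy] at this

theorem exists_mem_ekelandBelow_forall_le [CompleteSpace X] (hf : LowerSemicontinuous f)
    (x : X) : ∃ y ∈ ekelandBelow f x, ∀ z, f y ≤ f z + edist z y := by
  by_cases h : ∃ x₀ ∈ ekelandBelow f x, f x₀ ≠ ⊤
  · obtain ⟨x₀, hx₀, hfx₀⟩ := h
    obtain ⟨y, hy, hmin⟩ := exists_mem_ekelandBelow_forall_mem_eq hf hfx₀
    refine ⟨y, ekelandBelow_subset hx₀ hy, fun z => ?_⟩
    by_cases hz : z ∈ ekelandBelow f y
    · simp [hmin z hz]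
    · rw [edist_comm]
      exact (not_le.1 hz).le
  · push Not at h
    have hfx : f x = ⊤ := h x (self_mem_ekelandBelow x)
    -- with `f x = ∞` every point lies below `x`, so `f` is identically `∞`
    refine ⟨x, self_mem_ekelandBelow x, fun z => ?_⟩
    simp [h z (by simp [ekelandBelow, hfx])]

end EkelandOrder

/-- Ekeland's variational principle, order-theoretic form. -/
theorem ekeland_variational_principle {X : Type*} [MetricSpace X] [CompleteSpace X]
    (f : X → ℝ≥0∞) (hf : LowerSemicontinuous f) (xbar : X) :
    ∃ ybar : X, f ybar + ENNReal.ofReal (dist xbar ybar) ≤ f xbar ∧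
      ∀ z : X, f ybar ≤ f z + ENNReal.ofReal (dist z ybar) := by
  simp only [← edist_dist]
  exact exists_mem_ekelandBelow_forall_le hf xbar
end

section
/- Let (X, d) be a complete metric space, f : X → [0, ∞] lower semicontinuous, and define z₁ ≤ z₂ iff f(z₁) + d(z₁, z₂) ≤ f(z₂). Let (xₙ) be a non-increasing sequence for this order (xₙ₊₁ ≤ xₙ) with f(x₀) < ∞. Then (xₙ) is a Cauchy sequence and converges to a limit x∞ satisfying x∞ ≤ xₙ for every n. -/
open ENNReal Filter

/-!
Summing the chain inequalities telescopes to `∑ d(xᵢ₊₁, xᵢ) ≤ f x₀ < ∞`, so the sequence is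
Cauchy. The order is transitive by the triangle inequality, so `xₘ ≤ xₙ` for `m ≥ n`, and the
lower set `{a | a ≤ xₙ}` is closed because `f + d(·, xₙ)` is lower semicontinuous; hence it
contains the limit.
-/

/-- The Ekeland order: `EkelandLE f a b` reads `a ≤ b`. -/
def EkelandLE {X : Type*} [PseudoEMetricSpace X] (f : X → ℝ≥0∞) (a b : X) : Prop :=
  f a + edist a b ≤ f b

namespace EkelandLE

variable {X : Type*} [PseudoEMetricSpace X] {f : X → ℝ≥0∞}

theorem refl (a : X) : EkelandLE f a a := by
  simp [EkelandLE]

theorem trans {a b c : X} (hab : EkelandLE f a b) (hbc : EkelandLE f b c) :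
    EkelandLE f a c :=
  calc f a + edist a c ≤ f a + (edist a b + edist b c) := by gcongr; exact edist_triangle a b c
    _ = (f a + edist a b) + edist b c := (add_assoc _ _ _).symm
    _ ≤ f b + edist b c := by gcongr; exact hab
    _ ≤ f c := hbc

theorem of_succ_of_le {x : ℕ → X} (hx : ∀ n, EkelandLE f (x (n + 1)) (x n)) {m n : ℕ}
    (hmn : m ≤ n) : EkelandLE f (x n) (x m) := by
  induction n, hmn using Nat.le_induction with
  | base => exact refl _
  | succ n _ ih => exact (hx n).trans ih

theorem sum_range_edist_add_le {x : ℕ → X} (hx : ∀ n, EkelandLE f (x (n + 1)) (x n)) (n : ℕ) :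
    ∑ i ∈ Finset.range n, edist (x (i + 1)) (x i) + f (x n) ≤ f (x 0) := by
  induction n with
  | zero => simp
  | succ n ih =>
    calc ∑ i ∈ Finset.range (n + 1), edist (x (i + 1)) (x i) + f (x (n + 1))
        = ∑ i ∈ Finset.range n, edist (x (i + 1)) (x i)
            + (f (x (n + 1)) + edist (x (n + 1)) (x n)) := by
          rw [Finset.sum_range_succ]; ring
      _ ≤ ∑ i ∈ Finset.range n, edist (x (i + 1)) (x i) + f (x n) := by gcongr; exact hx n
      _ ≤ f (x 0) := ih

theorem cauchySeq_of_succ {x : ℕ → X} (hx : ∀ n, EkelandLE f (x (n + 1)) (x n))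
    (h0 : f (x 0) ≠ ⊤) : CauchySeq x := by
  refine cauchySeq_of_edist_le_of_tsum_ne_top (fun n ↦ edist (x (n + 1)) (x n))
    (fun n ↦ (edist_comm _ _).le) (ne_top_of_le_ne_top h0 ?_)
  exact ENNReal.tsum_le_of_sum_range_le fun n ↦
    le_of_add_le_left (sum_range_edist_add_le hx n)

theorem isClosed_setOf (hf : LowerSemicontinuous f) (b : X) :
    IsClosed {a | EkelandLE f a b} :=
  (hf.add (continuous_id.edist continuous_const).lowerSemicontinuous).isClosed_preimage (f b)

end EkelandLE

/-- A non-increasing sequence for the Ekeland order with `f x₀ < ∞` is Cauchy and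
converges to a point below every term of the sequence. -/
theorem ekeland_chain_cauchy_limit {X : Type*} [MetricSpace X] [CompleteSpace X]
    (f : X → ℝ≥0∞) (hf : LowerSemicontinuous f) (x : ℕ → X)
    (hchain : ∀ n : ℕ, f (x (n + 1)) + ENNReal.ofReal (dist (x (n + 1)) (x n)) ≤ f (x n))
    (h0 : f (x 0) < ⊤) :
    CauchySeq x ∧ ∃ xlim : X, Tendsto x atTop (nhds xlim) ∧
      ∀ n : ℕ, f xlim + ENNReal.ofReal (dist xlim (x n)) ≤ f (x n) := by
  have hx : ∀ n, EkelandLE f (x (n + 1)) (x n) := by simpa only [EkelandLE, edist_dist]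
  have hcauchy := EkelandLE.cauchySeq_of_succ hx h0.ne
  obtain ⟨xlim, hlim⟩ := cauchySeq_tendsto_of_complete hcauchy
  refine ⟨hcauchy, xlim, hlim, fun n ↦ ?_⟩
  have hbelow : EkelandLE f xlim (x n) :=
    (EkelandLE.isClosed_setOf hf (x n)).mem_of_tendsto hlim
      (eventually_atTop.2 ⟨n, fun _ ↦ EkelandLE.of_succ_of_le hx⟩)
  simpa only [EkelandLE, edist_dist] using hbelow
end

section
/- Let (P, ≤) be a partially ordered set and F : P → ℝ a strictly monotone function (p < q implies F(p) < F(q)) that is bounded above. Suppose that every non-decreasing sequence (pₙ)_{n∈ℕ} in P has an upper bound in P, and that F is 'approximately realizing suprema' in the sense that for every p ∈ P, setting G(p) := sup{F(q) : q ≥ p}, there exists q ≥ p with F(q) ≥ (F(p) + G(p))/2. Then for every p₀ ∈ P there exists a maximal element m ∈ P with m ≥ p₀ (maximal meaning m ≤ q implies m = q). -/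
/-!
Iterate "approximate supremum" steps from `p₀`: each step at least halves the gap
`G p - F p` between the supremum of `F` above `p` and `F p`. An upper bound `q` of the
resulting chain has gap at most that of every term, hence `G q = F q`, and then strict
monotonicity of `F` forbids anything strictly above `q`.
-/

noncomputable def supIci {P : Type*} [Preorder P] (F : P → ℝ) (p : P) : ℝ :=
  sSup (F '' Set.Ici p)

section SupIci

variable {P : Type*} [Preorder P] {F : P → ℝ}

theorem le_supIci (hbdd : BddAbove (Set.range F)) {p q : P} (hpq : p ≤ q) :
    F q ≤ supIci F p :=
  le_csSup (hbdd.mono (Set.image_subset_range _ _)) ⟨q, hpq, rfl⟩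

theorem supIci_antitone (hbdd : BddAbove (Set.range F)) : Antitone (supIci F) :=
  fun _ _ hpq => csSup_le_csSup (hbdd.mono (Set.image_subset_range _ _))
    (Set.image_nonempty.2 Set.nonempty_Ici) (Set.image_mono (Set.Ici_subset_Ici.2 hpq))

theorem supIci_sub_antitone (hbdd : BddAbove (Set.range F)) (hF : Monotone F) :
    Antitone (fun p => supIci F p - F p) :=
  fun _ _ hpq => sub_le_sub (supIci_antitone hbdd hpq) (hF hpq)

theorem supIci_sub_le_half (hbdd : BddAbove (Set.range F)) {p q : P} (hpq : p ≤ q)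
    (hq : (F p + supIci F p) / 2 ≤ F q) :
    supIci F q - F q ≤ (supIci F p - F p) / 2 := by
  have := supIci_antitone hbdd hpq
  linarith

theorem supIci_sub_le_geometric (hbdd : BddAbove (Set.range F)) {s : ℕ → P}
    (hs : ∀ n, s n ≤ s (n + 1)) (hhalf : ∀ n, (F (s n) + supIci F (s n)) / 2 ≤ F (s (n + 1)))
    (n : ℕ) : supIci F (s n) - F (s n) ≤ (supIci F (s 0) - F (s 0)) * (1 / 2) ^ n := by
  induction n with
  | zero => simp
  | succ n ih =>
    calc supIci F (s (n + 1)) - F (s (n + 1)) ≤ (supIci F (s n) - F (s n)) / 2 :=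
          supIci_sub_le_half hbdd (hs n) (hhalf n)
      _ ≤ (supIci F (s 0) - F (s 0)) * (1 / 2) ^ n / 2 := by gcongr
      _ = (supIci F (s 0) - F (s 0)) * (1 / 2) ^ (n + 1) := by ring

theorem supIci_le_of_forall_le (hbdd : BddAbove (Set.range F)) (hF : Monotone F)
    {s : ℕ → P} (hs : ∀ n, s n ≤ s (n + 1))
    (hhalf : ∀ n, (F (s n) + supIci F (s n)) / 2 ≤ F (s (n + 1)))
    {q : P} (hq : ∀ n, s n ≤ q) : supIci F q ≤ F q := by
  have hgap : ∀ n, supIci F q - F q ≤ (supIci F (s 0) - F (s 0)) * (1 / 2) ^ n := fun n =>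
    (supIci_sub_antitone hbdd hF (hq n)).trans (supIci_sub_le_geometric hbdd hs hhalf n)
  have hlim : Filter.Tendsto (fun n : ℕ => (supIci F (s 0) - F (s 0)) * (1 / 2) ^ n)
      Filter.atTop (nhds 0) := by
    simpa using (tendsto_pow_atTop_nhds_zero_of_lt_one (by norm_num : (0 : ℝ) ≤ 1 / 2)
      (by norm_num)).const_mul (supIci F (s 0) - F (s 0))
  linarith [ge_of_tendsto' hlim hgap]

theorem isMax_of_supIci_le (hbdd : BddAbove (Set.range F)) (hF : StrictMono F) {q : P}
    (hq : supIci F q ≤ F q) : IsMax q := by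
  intro r hqr
  by_contra hrq
  have := hF (lt_of_le_not_ge hqr hrq)
  linarith [le_supIci hbdd hqr]

end SupIci

/-- Abstract `big steps' maximality argument: a partial order with a bounded
strictly monotone real-valued function, upper bounds for increasing sequences,
and approximate realization of suprema, has maximal elements above any point. -/
theorem exists_maximal_of_strictMono_bounded {P : Type*} [PartialOrder P]
    (F : P → ℝ) (hmono : ∀ p q : P, p < q → F p < F q)
    (hbdd : BddAbove (Set.range F))
    (hchain : ∀ p : ℕ → P, (∀ n, p n ≤ p (n + 1)) → ∃ q : P, ∀ n, p n ≤ q)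
    (happrox : ∀ p : P, ∃ q : P, p ≤ q ∧
      (F p + sSup (F '' Set.Ici p)) / 2 ≤ F q)
    (p₀ : P) :
    ∃ m : P, p₀ ≤ m ∧ ∀ q : P, m ≤ q → m = q := by
  have hF : StrictMono F := fun p q => hmono p q
  choose next hle hhalf using happrox
  let s : ℕ → P := fun n => next^[n] p₀
  have hs_succ : ∀ n, s (n + 1) = next (s n) := fun n => Function.iterate_succ_apply' _ _ _
  have hs : ∀ n, s n ≤ s (n + 1) := fun n => hs_succ n ▸ hle (s n)
  have hs_half : ∀ n, (F (s n) + supIci F (s n)) / 2 ≤ F (s (n + 1)) := fun n =>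
    hs_succ n ▸ hhalf (s n)
  obtain ⟨q, hq⟩ := hchain s hs
  have hmax := isMax_of_supIci_le hbdd hF (supIci_le_of_forall_le hbdd hF.monotone hs hs_half hq)
  exact ⟨q, hq 0, fun r hqr => le_antisymm hqr (hmax hqr)⟩
end
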